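/- arXiv:1404.2899 — 2 statements merged into one kernel-verified Lean document; each statement's English description precedes it below -/
import Mathlib

section
/- Let U, V ⊆ ℂ be open sets, h : U → V a holomorphic bijection from U onto V, and φ : V → ℝ^n a C¹ map whose derivative is square-integrable on V. Then the Dirichlet energy is conformally invariant: ∫_U (‖∂_x(φ∘h)(z)‖² + ‖∂_y(φ∘h)(z)‖²) dz = ∫_V (‖∂_x φ(w)‖² + ‖∂_y φ(w)‖²) dw, where the integrals are with respect to Lebesgue measure on ℂ ≅ ℝ² and ∂_x, ∂_y denote the partial derivatives in the real and imaginary coordinate directions. -/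
/-!
The derivative of a holomorphic `h` at `z` is multiplication by `c = h'(z)`, which maps the
frame `(1, i)` to `(c, i c)`: a rotation of the frame followed by a dilation by `|c|`. Hence the
energy density of `φ ∘ h` at `z` is `|c|²` times that of `φ` at `h z`, and `|c|²` is the real
Jacobian determinant of `h`, so the change of variables formula turns one integral into the other.
-/

open MeasureTheory Complex ContinuousLinearMap

section

variable {E : Type*} [NormedAddCommGroup E] [InnerProductSpace ℝ E]

theorem norm_sq_add_norm_sq_rotate (u v : E) (a b : ℝ) :
    ‖a • u + b • v‖ ^ 2 + ‖(-b) • u + a • v‖ ^ 2 = (a ^ 2 + b ^ 2) * (‖u‖ ^ 2 + ‖v‖ ^ 2) := by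
  simp only [← real_inner_self_eq_norm_sq, inner_add_left, inner_add_right,
    real_inner_smul_left, real_inner_smul_right, real_inner_comm u v]
  ring

noncomputable def dirichletDensity (L : ℂ →L[ℝ] E) : ℝ := ‖L 1‖ ^ 2 + ‖L I‖ ^ 2

theorem dirichletDensity_comp_toSpanSingleton (L : ℂ →L[ℝ] E) (c : ℂ) :
    dirichletDensity (L.comp ((toSpanSingleton ℂ c).restrictScalars ℝ))
      = normSq c * dirichletDensity L := by
  have hL : ∀ w : ℂ, L w = w.re • L 1 + w.im • L I := fun w ↦ by
    rw [← map_smul, ← map_smul, ← map_add, real_smul, real_smul, mul_one, re_add_im]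
  simp only [dirichletDensity, comp_apply, coe_restrictScalars', toSpanSingleton_apply,
    smul_eq_mul, one_mul]
  rw [hL c, hL (I * c), I_mul_re, I_mul_im, norm_sq_add_norm_sq_rotate, normSq_apply]
  ring

theorem dirichletDensity_fderiv_comp {φ : ℂ → E} {h : ℂ → ℂ} {z : ℂ}
    (hφ : DifferentiableAt ℝ φ (h z)) (hh : DifferentiableAt ℂ h z) :
    dirichletDensity (fderiv ℝ (φ ∘ h) z)
      = normSq (deriv h z) * dirichletDensity (fderiv ℝ φ (h z)) := by
  have hh' := hh.hasDerivAt.hasFDerivAt.restrictScalars ℝ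
  rw [fderiv_comp z hφ hh'.differentiableAt, hh'.fderiv, dirichletDensity_comp_toSpanSingleton]

end

theorem det_restrictScalars_toSpanSingleton (c : ℂ) :
    ((toSpanSingleton ℂ c).restrictScalars ℝ).det = normSq c := by
  have : ((toSpanSingleton ℂ c).restrictScalars ℝ : ℂ →ₗ[ℝ] ℂ) = Algebra.lmul ℝ ℂ c := by
    ext x
    simp [mul_comm]
  rw [ContinuousLinearMap.det, this, ← Algebra.norm_apply, Algebra.norm_complex_apply]

theorem dirichlet_energy_conformally_invariant_general
    (n : ℕ) (U V : Set ℂ) (hU : IsOpen U) (hV : IsOpen V)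
    (h : ℂ → ℂ) (hh : DifferentiableOn ℂ h U) (hbij : Set.BijOn h U V)
    (φ : ℂ → EuclideanSpace ℝ (Fin n))
    (hφ : ContDiffOn ℝ 1 φ V) :
    ∫ z in U, (‖fderiv ℝ (φ ∘ h) z 1‖ ^ 2 + ‖fderiv ℝ (φ ∘ h) z Complex.I‖ ^ 2)
      = ∫ w in V, (‖fderiv ℝ φ w 1‖ ^ 2 + ‖fderiv ℝ φ w Complex.I‖ ^ 2) := by
  have hh_at : ∀ z ∈ U, DifferentiableAt ℂ h z := fun z hz ↦
    hh.differentiableAt (hU.mem_nhds hz)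
  have hφ_at : ∀ w ∈ V, DifferentiableAt ℝ φ w := fun w hw ↦
    (hφ.contDiffAt (hV.mem_nhds hw)).differentiableAt one_ne_zero
  have change_of_variables := integral_image_eq_integral_abs_det_fderiv_smul volume
    hU.measurableSet
    (fun z hz ↦ ((hh_at z hz).hasDerivAt.hasFDerivAt.restrictScalars ℝ).hasFDerivWithinAt)
    hbij.injOn (fun w ↦ dirichletDensity (fderiv ℝ φ w))
  rw [hbij.image_eq] at change_of_variables
  change ∫ z in U, dirichletDensity (fderiv ℝ (φ ∘ h) z)
    = ∫ w in V, dirichletDensity (fderiv ℝ φ w)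
  rw [change_of_variables]
  refine setIntegral_congr_fun hU.measurableSet fun z hz ↦ ?_
  rw [dirichletDensity_fderiv_comp (hφ_at _ (hbij.mapsTo hz)) (hh_at z hz),
    det_restrictScalars_toSpanSingleton, abs_of_nonneg (normSq_nonneg _), smul_eq_mul]

/-- Let `U, V ⊆ ℂ` be open, `h : U → V` a holomorphic bijection from `U`
onto `V`, and `φ : V → ℝ^n` a `C¹` map with square-integrable derivative on `V`. Then the
Dirichlet energy is conformally invariant:
`∫_U (‖∂_x(φ∘h)‖² + ‖∂_y(φ∘h)‖²) = ∫_V (‖∂_x φ‖² + ‖∂_y φ‖²)`. -/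
theorem dirichlet_energy_conformally_invariant
    (n : ℕ) (U V : Set ℂ) (hU : IsOpen U) (hV : IsOpen V)
    (h : ℂ → ℂ) (hh : DifferentiableOn ℂ h U) (hbij : Set.BijOn h U V)
    (φ : ℂ → EuclideanSpace ℝ (Fin n))
    (hφ : ContDiffOn ℝ 1 φ V)
    (hφint : IntegrableOn (fun w => ‖fderiv ℝ φ w‖ ^ 2) V) :
    ∫ z in U, (‖fderiv ℝ (φ ∘ h) z 1‖ ^ 2 + ‖fderiv ℝ (φ ∘ h) z Complex.I‖ ^ 2)
      = ∫ w in V, (‖fderiv ℝ φ w 1‖ ^ 2 + ‖fderiv ℝ φ w Complex.I‖ ^ 2) :=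
  dirichlet_energy_conformally_invariant_general n U V hU hV h hh hbij φ hφ
end

section
/- Let Ω ⊆ ℝ² be an open set, and let Ω⁺ = Ω ∩ {(x,y) : y > 0} and Ω⁻ = Ω ∩ {(x,y) : y < 0}. Let φ : Ω → ℝ^n be a C¹ map which is C² and satisfies Δφ = 0 on Ω⁺ and on Ω⁻. Then φ is C² and satisfies Δφ = 0 on all of Ω; that is, two harmonic maps that match to first order along the common interface glue to a single harmonic map. -/
/-- The componentwise Laplacian `Δψ = ∂_x∂_x ψ + ∂_y∂_y ψ` of a map `ψ : ℝ² → ℝ^n`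
at a point `p`. -/
noncomputable def laplacian2 (n : ℕ) (ψ : ℝ × ℝ → EuclideanSpace ℝ (Fin n))
    (p : ℝ × ℝ) : EuclideanSpace ℝ (Fin n) :=
  fderiv ℝ (fun q => fderiv ℝ ψ q ((1 : ℝ), (0 : ℝ))) p ((1 : ℝ), (0 : ℝ))
    + fderiv ℝ (fun q => fderiv ℝ ψ q ((0 : ℝ), (1 : ℝ))) p ((0 : ℝ), (1 : ℝ))

/-!
Work in `ℂ ≅ ℝ²` and componentwise. For a real `C¹` function `u`, the complex partial
`g = u_x - i u_y` is continuous, and holomorphic off the real axis because `u` is harmonic there.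
Every rectangle integral of `g` vanishes: cut the rectangle along the real axis and apply
Cauchy–Goursat to the two halves, which only needs continuity up to the cut. By Morera, `g` is
holomorphic on all of `Ω`, so locally `u` is the real part of a primitive of `g` (up to a
constant), hence harmonic.
-/

open Complex Set Metric Topology InnerProductSpace Laplacian
open scoped Interval

section Morera

variable {E : Type*} [NormedAddCommGroup E] [NormedSpace ℂ E]

theorem Complex.rectangle_subset_rectangle {z w z' w' : ℂ} (h₁ : z'.re ∈ [[z.re, w.re]])
    (h₂ : w'.re ∈ [[z.re, w.re]]) (h₃ : z'.im ∈ [[z.im, w.im]]) (h₄ : w'.im ∈ [[z.im, w.im]]) :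
    Rectangle z' w' ⊆ Rectangle z w :=
  reProdIm_subset_iff.2 (prod_mono (uIcc_subset_uIcc h₁ h₂) (uIcc_subset_uIcc h₃ h₄))

theorem wedgeIntegral_add_wedgeIntegral_eq_zero_of_im_ne_zero {f : ℂ → E} {U : Set ℂ}
    (hc : ContinuousOn f U) (hd : ∀ x ∈ U, x.im ≠ 0 → DifferentiableAt ℂ f x) {z w : ℂ}
    (hzw : Rectangle z w ⊆ U) (h0 : (0 : ℝ) ∉ uIoo z.im w.im) :
    wedgeIntegral z w f + wedgeIntegral w z f = 0 := by
  rw [wedgeIntegral_add_wedgeIntegral_eq]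
  refine integral_boundary_rect_eq_zero_of_differentiable_on_off_countable f z w ∅
    countable_empty (hc.mono hzw) fun x ⟨hx, _⟩ ↦ hd x (hzw ?_) fun hx0 ↦ h0 (hx0 ▸ hx.2)
  exact reProdIm_subset_iff.2 (prod_mono Ioo_subset_Icc_self Ioo_subset_Icc_self) hx

theorem wedgeIntegral_add_wedgeIntegral_eq_add_of_mem_uIcc {f : ℂ → E} {z w : ℂ}
    (hc : ContinuousOn f (Rectangle z w)) {t : ℝ} (ht : t ∈ [[z.im, w.im]]) :
    wedgeIntegral z w f + wedgeIntegral w z f =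
      (wedgeIntegral z (w.re + t * I) f + wedgeIntegral (w.re + t * I) z f) +
        (wedgeIntegral (z.re + t * I) w f + wedgeIntegral w (z.re + t * I) f) := by
  have hvert : ∀ a ∈ [[z.re, w.re]], ∀ c ∈ [[z.im, w.im]],
      IntervalIntegrable (fun y : ℝ ↦ f (a + y * I)) MeasureTheory.volume c t := by
    intro a ha c hc'
    refine ContinuousOn.intervalIntegrable (hc.comp (by fun_prop) fun y hy ↦ ?_)
    simpa [Rectangle, mem_reProdIm, ha] using uIcc_subset_uIcc hc' ht hy
  simp only [wedgeIntegral_add_wedgeIntegral_eq, add_re, add_im, ofReal_re, ofReal_im, mul_re,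
    mul_im, I_re, I_im, mul_zero, mul_one, sub_zero, add_zero, zero_add]
  rw [← intervalIntegral.integral_add_adjacent_intervals
      (hvert _ right_mem_uIcc _ left_mem_uIcc) (hvert _ right_mem_uIcc _ right_mem_uIcc).symm,
    ← intervalIntegral.integral_add_adjacent_intervals
      (hvert _ left_mem_uIcc _ left_mem_uIcc) (hvert _ left_mem_uIcc _ right_mem_uIcc).symm]
  simp only [smul_add]
  abel

theorem isConservativeOn_of_differentiableAt_of_im_ne_zero {f : ℂ → E} {U : Set ℂ}
    (hc : ContinuousOn f U) (hd : ∀ z ∈ U, z.im ≠ 0 → DifferentiableAt ℂ f z) :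
    IsConservativeOn f U := by
  intro z w hzw
  rw [← add_eq_zero_iff_eq_neg]
  by_cases h0 : (0 : ℝ) ∈ uIoo z.im w.im
  · have h0' : (0 : ℝ) ∈ [[z.im, w.im]] := Ioo_subset_Icc_self h0
    have hlow : Rectangle z (w.re + (0 : ℝ) * I) ⊆ U :=
      (rectangle_subset_rectangle left_mem_uIcc (by simp) left_mem_uIcc (by simpa)).trans hzw
    have hupp : Rectangle (z.re + (0 : ℝ) * I) w ⊆ U :=
      (rectangle_subset_rectangle (by simp) right_mem_uIcc (by simpa) right_mem_uIcc).trans hzw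
    rw [wedgeIntegral_add_wedgeIntegral_eq_add_of_mem_uIcc (hc.mono hzw) h0',
      wedgeIntegral_add_wedgeIntegral_eq_zero_of_im_ne_zero hc hd hlow (by simp),
      wedgeIntegral_add_wedgeIntegral_eq_zero_of_im_ne_zero hc hd hupp (by simp), add_zero]
  · exact wedgeIntegral_add_wedgeIntegral_eq_zero_of_im_ne_zero hc hd hzw h0

end Morera

theorem ContinuousLinearMap.apply_eq_re_smul_add_im_smul {F : Type*} [AddCommGroup F]
    [Module ℝ F] [TopologicalSpace F] (L : ℂ →L[ℝ] F) (v : ℂ) :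
    L v = v.re • L 1 + v.im • L I := by
  rw [← map_smul, ← map_smul, ← map_add, real_smul, real_smul, mul_one, re_add_im]

/-- Twice the Wirtinger derivative `∂u/∂z`. -/
noncomputable def complexPartial (u : ℂ → ℝ) (z : ℂ) : ℂ :=
  fderiv ℝ u z 1 - I * fderiv ℝ u z I

theorem harmonicOnNhd_of_differentiableOn_complexPartial {u : ℂ → ℝ} {U : Set ℂ}
    (hU : IsOpen U) (hu : DifferentiableOn ℝ u U)
    (hg : DifferentiableOn ℂ (complexPartial u) U) :
    HarmonicOnNhd u U := by
  intro z hz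
  obtain ⟨r, hr, hball⟩ := Metric.isOpen_iff.1 hU z hz
  obtain ⟨G, hG⟩ := (hg.mono hball).isExactOn_ball
  have hGre : ∀ x ∈ ball z r, HasFDerivAt (fun x ↦ (G x).re)
      (reCLM.comp ((ContinuousLinearMap.smulRight 1 (complexPartial u x)).restrictScalars ℝ)) x :=
    fun x hx ↦ reCLM.hasFDerivAt.comp x ((hG x hx).hasFDerivAt.restrictScalars ℝ)
  obtain ⟨c, hc⟩ := isOpen_ball.exists_eq_add_of_fderiv_eq (convex_ball z r).isPreconnected
    (hu.mono hball) (fun x hx ↦ (hGre x hx).differentiableAt.differentiableWithinAt)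
    fun x hx ↦ by
      ext v
      simpa [(hGre x hx).fderiv, complexPartial] using
        (fderiv ℝ u x).apply_eq_re_smul_add_im_smul v
  have hGan : AnalyticAt ℂ G z :=
    DifferentiableOn.analyticAt (fun x hx ↦ (hG x hx).differentiableAt.differentiableWithinAt)
      (isOpen_ball.mem_nhds (mem_ball_self hr))
  refine (harmonicAt_congr_nhds ?_).2 (hGan.harmonicAt_re.add (harmonicAt_const c))
  filter_upwards [isOpen_ball.mem_nhds (mem_ball_self hr)] with x hx using hc hx

theorem harmonicOnNhd_of_harmonicAt_of_im_ne_zero_real {u : ℂ → ℝ} {U : Set ℂ} (hU : IsOpen U)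
    (hu : ContDiffOn ℝ 1 u U) (hh : ∀ z ∈ U, z.im ≠ 0 → HarmonicAt u z) :
    HarmonicOnNhd u U := by
  have hu' : ContinuousOn (fderiv ℝ u) U := hu.continuousOn_fderiv_of_isOpen hU le_rfl
  have hcont : ContinuousOn (complexPartial u) U := by
    unfold complexPartial
    fun_prop
  have hdiff : ∀ z ∈ U, z.im ≠ 0 → DifferentiableAt ℂ (complexPartial u) z :=
    fun z hz hz0 ↦ HarmonicAt.differentiableAt_complex_partial (hh z hz hz0)
  have hhol : DifferentiableOn ℂ (complexPartial u) U :=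
    (isConservativeOn_and_continuousOn_iff_isDifferentiableOn hU).1
      ⟨isConservativeOn_of_differentiableAt_of_im_ne_zero hcont hdiff, hcont⟩
  exact harmonicOnNhd_of_differentiableOn_complexPartial hU (hu.differentiableOn one_ne_zero) hhol

theorem harmonicAt_pi_iff {E : Type*} [NormedAddCommGroup E] [InnerProductSpace ℝ E]
    [FiniteDimensional ℝ E] {ι : Type*} [Fintype ι] {F : Type*} [NormedAddCommGroup F]
    [NormedSpace ℝ F] {f : E → ι → F} {x : E} :
    HarmonicAt f x ↔ ∀ i, HarmonicAt (fun y ↦ f y i) x := by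
  refine ⟨fun h i ↦ h.comp_CLM (ContinuousLinearMap.proj i), fun h ↦ ?_⟩
  have hf : ContDiffAt ℝ 2 f x := contDiffAt_pi.2 fun i ↦ (h i).1
  refine ⟨hf, ?_⟩
  filter_upwards [hf.eventually (by simp), Filter.eventually_all.2 fun i ↦ (h i).2]
    with y hy hy0
  funext i
  have hi := hy.laplacian_CLM_comp_left (l := ContinuousLinearMap.proj (R := ℝ) i)
  simp only [Function.comp_def, ContinuousLinearMap.proj_apply] at hi
  rw [← hi, hy0 i, Pi.zero_apply, Pi.zero_apply, Pi.zero_apply]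

theorem harmonicOnNhd_of_harmonicAt_of_im_ne_zero {F : Type*} [NormedAddCommGroup F]
    [NormedSpace ℝ F] [FiniteDimensional ℝ F] {f : ℂ → F} {U : Set ℂ} (hU : IsOpen U)
    (hf : ContDiffOn ℝ 1 f U) (hh : ∀ z ∈ U, z.im ≠ 0 → HarmonicAt f z) :
    HarmonicOnNhd f U := by
  let e := (Module.finBasis ℝ F).equivFunL
  have coord : ∀ z, HarmonicAt f z ↔ ∀ i, HarmonicAt (fun y ↦ e (f y) i) z := fun z ↦
    (harmonicAt_comp_CLE_iff e).symm.trans harmonicAt_pi_iff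
  intro z hz
  refine (coord z).2 fun i ↦ harmonicOnNhd_of_harmonicAt_of_im_ne_zero_real hU ?_
    (fun w hw hw0 ↦ (coord w).1 (hh w hw hw0) i) z hz
  exact ((ContinuousLinearMap.proj i).comp (e : F →L[ℝ] Fin _ → ℝ)).contDiff.comp_contDiffOn hf

theorem laplacian2_equivRealProd {n : ℕ} {φ : ℝ × ℝ → EuclideanSpace ℝ (Fin n)} {z : ℂ}
    (hφ : ContDiffAt ℝ 2 φ (equivRealProdCLM z)) :
    laplacian2 n φ (equivRealProdCLM z) = Δ (φ ∘ equivRealProdCLM) z := by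
  have hd : DifferentiableAt ℝ (fderiv ℝ φ) (equivRealProdCLM z) :=
    (hφ.fderiv_right (m := 1) (by norm_num)).differentiableAt one_ne_zero
  have hcomp : iteratedFDeriv ℝ 2 (φ ∘ equivRealProdCLM) z =
      (iteratedFDeriv ℝ 2 φ (equivRealProdCLM z)).compContinuousLinearMap
        fun _ ↦ (equivRealProdCLM : ℂ →L[ℝ] ℝ × ℝ) := by
    simpa only [← iteratedFDerivWithin_univ, preimage_univ] using
      equivRealProdCLM.iteratedFDerivWithin_comp_right φ uniqueDiffOn_univ (mem_univ _) 2
  rw [laplacian2, fderiv_clm_apply hd (differentiableAt_const _),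
    fderiv_clm_apply hd (differentiableAt_const _)]
  simp [laplacian_eq_iteratedFDeriv_complexPlane, hcomp, iteratedFDeriv_two_apply]

theorem harmonicOnNhd_comp_equivRealProd_iff {n : ℕ} {φ : ℝ × ℝ → EuclideanSpace ℝ (Fin n)}
    {S : Set (ℝ × ℝ)} (hS : IsOpen S) :
    HarmonicOnNhd (φ ∘ equivRealProdCLM) (equivRealProdCLM ⁻¹' S) ↔
      ContDiffOn ℝ 2 φ S ∧ ∀ p ∈ S, laplacian2 n φ p = 0 := by
  have hS' : IsOpen (equivRealProdCLM ⁻¹' S) := hS.preimage equivRealProdCLM.continuous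
  constructor
  · intro h
    have hφ : ContDiffOn ℝ 2 φ S := equivRealProdCLM.contDiffOn_comp_iff.1 h.contDiffOn
    refine ⟨hφ, fun p hp ↦ ?_⟩
    obtain ⟨z, rfl⟩ := equivRealProdCLM.surjective p
    rw [laplacian2_equivRealProd (hφ.contDiffAt (hS.mem_nhds hp))]
    exact (h z hp).2.eq_of_nhds
  · rintro ⟨hφ, hΔ⟩ z hz
    refine ⟨(equivRealProdCLM.contDiffOn_comp_iff.2 hφ).contDiffAt (hS'.mem_nhds hz), ?_⟩
    filter_upwards [hS'.mem_nhds hz] with w hw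
    rw [← laplacian2_equivRealProd (hφ.contDiffAt (hS.mem_nhds hw)), hΔ _ hw, Pi.zero_apply]

/-- Let `Ω ⊆ ℝ²` be open, `Ω⁺ = Ω ∩ {y > 0}`, `Ω⁻ = Ω ∩ {y < 0}`, and
`φ : Ω → ℝ^n` a `C¹` map which is `C²` and harmonic on `Ω⁺` and on `Ω⁻`. Then `φ` is `C²`
and harmonic on all of `Ω`: two harmonic maps matching to first order along the common
interface glue to a single harmonic map. -/
theorem harmonic_gluing
    (n : ℕ) (Ω : Set (ℝ × ℝ)) (hΩ : IsOpen Ω)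
    (φ : ℝ × ℝ → EuclideanSpace ℝ (Fin n))
    (hC1 : ContDiffOn ℝ 1 φ Ω)
    (hC2p : ContDiffOn ℝ 2 φ (Ω ∩ {p : ℝ × ℝ | 0 < p.2}))
    (hharmp : ∀ p ∈ Ω ∩ {p : ℝ × ℝ | 0 < p.2}, laplacian2 n φ p = 0)
    (hC2m : ContDiffOn ℝ 2 φ (Ω ∩ {p : ℝ × ℝ | p.2 < 0}))
    (hharmm : ∀ p ∈ Ω ∩ {p : ℝ × ℝ | p.2 < 0}, laplacian2 n φ p = 0) :
    ContDiffOn ℝ 2 φ Ω ∧ ∀ p ∈ Ω, laplacian2 n φ p = 0 := by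
  have hpos := (harmonicOnNhd_comp_equivRealProd_iff
    (hΩ.inter (isOpen_lt continuous_const continuous_snd))).2 ⟨hC2p, hharmp⟩
  have hneg := (harmonicOnNhd_comp_equivRealProd_iff
    (hΩ.inter (isOpen_lt continuous_snd continuous_const))).2 ⟨hC2m, hharmm⟩
  refine (harmonicOnNhd_comp_equivRealProd_iff hΩ).1 <|
    harmonicOnNhd_of_harmonicAt_of_im_ne_zero (hΩ.preimage equivRealProdCLM.continuous)
      (equivRealProdCLM.contDiffOn_comp_iff.2 hC1) fun z hz hz0 ↦ ?_
  rcases hz0.lt_or_gt with him | him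
  · exact hneg z ⟨hz, him⟩
  · exact hpos z ⟨hz, him⟩
end
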